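/- Suppose ε ∈ (0,1/2) and K ⊂ R^n is a convex body with (1−ε)B ⊆ K ⊆ (1+ε)B that satisfies K = C_K·ΓK for some constant C_K > 0. Then ((1−ε)/(1+ε))^{n+1} ≤ C_B/C_K ≤ ((1+ε)/(1−ε))^{n+1}, where C_B = (n+1)κ_n/(2κ_{n−1}). -/

import Mathlib

/-
Slicing the unit ball of ℝⁿ perpendicular to a unit vector v gives (n−1)-balls of radius
√(1 − t²), so ∫_B |⟨v, x⟩| dx = κ_{n−1} ∫_{−1}^{1} |t| (1 − t²)^{(n−1)/2} dt = 2κ_{n−1}/(n + 1);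
by homogeneity h_{Γ(rB)}(φ) = r‖φ‖/C_B, i.e. B = C_B·ΓB. If (1−ε)B ⊆ K ⊆ (1+ε)B, both vol K and
∫_K |⟨φ, x⟩| dx are squeezed between the corresponding quantities of the two balls, so ΓK contains
the ball of radius (1−ε)^{n+1}/((1+ε)^n C_B) and lies in the ball of radius
(1+ε)^{n+1}/((1−ε)^n C_B). Feeding this into K = C_K·ΓK and comparing radii with (1 ∓ ε)B gives
both bounds on C_B/C_K.
-/

open MeasureTheory Pointwise

/-- κ_m: the volume of the unit Euclidean ball in ℝ^m. -/
noncomputable def unitBallVol (m : ℕ) : ℝ :=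
  (volume (Metric.ball (0 : EuclideanSpace ℝ (Fin m)) 1)).toReal

/-- The centroid body ΓK, described as the intersection of the half-spaces determined by its
support function h_{ΓK}(φ) = (1/vol(K)) ∫_K |⟨φ,x⟩| dx. -/
noncomputable def centroidBody (n : ℕ) (K : Set (EuclideanSpace ℝ (Fin n))) :
    Set (EuclideanSpace ℝ (Fin n)) :=
  {y | ∀ φ : EuclideanSpace ℝ (Fin n),
    (inner ℝ y φ : ℝ) ≤ (volume K).toReal⁻¹ * ∫ x in K, |(inner ℝ φ x : ℝ)|}

/-- The constant C_B of the unit ball, `B = C_B • ΓB`. -/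
noncomputable def centroidConstantBall (d : ℕ) : ℝ :=
  (d + 1) * unitBallVol d / (2 * unitBallVol (d - 1))

open Metric Module InnerProductSpace

theorem unitBallVol_pos (m : ℕ) : 0 < unitBallVol m :=
  ENNReal.toReal_pos (measure_ball_pos volume 0 one_pos).ne' measure_ball_lt_top.ne

theorem centroidConstantBall_pos (d : ℕ) : 0 < centroidConstantBall d := by
  have := unitBallVol_pos d
  have := unitBallVol_pos (d - 1)
  rw [centroidConstantBall]
  positivity

section OneDimensional

open intervalIntegral

theorem hasDerivAt_sqrt_one_sub_sq_pow (k : ℕ) {t : ℝ} (ht : t ^ 2 < 1) :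
    HasDerivAt (fun s : ℝ => -√(1 - s ^ 2) ^ (k + 2) / (k + 2)) (√(1 - t ^ 2) ^ k * t) t := by
  have hpos : 0 < √(1 - t ^ 2) := Real.sqrt_pos.2 (by linarith)
  have h := (((hasDerivAt_pow 2 t).const_sub 1).sqrt (by linarith)).fun_pow (k + 2)
  refine (h.fun_neg.div_const ((k : ℝ) + 2)).congr_deriv ?_
  rw [show k + 2 - 1 = k + 1 by omega, pow_succ]
  push_cast
  field_simp

theorem integral_sqrt_one_sub_sq_pow_mul_self (k : ℕ) :
    ∫ t in (0 : ℝ)..1, √(1 - t ^ 2) ^ k * t = 1 / (k + 2) := by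
  rw [integral_eq_sub_of_hasDeriv_right_of_le zero_le_one (by fun_prop)
    (fun t ht => (hasDerivAt_sqrt_one_sub_sq_pow k (by nlinarith [ht.1, ht.2])).hasDerivWithinAt)
    (by apply Continuous.intervalIntegrable; fun_prop)]
  simp
  ring

theorem integral_sqrt_one_sub_sq_pow_mul_abs (k : ℕ) :
    ∫ t in (-1 : ℝ)..1, √(1 - t ^ 2) ^ k * |t| = 2 / (k + 2) := by
  have hint : ∀ a b : ℝ, IntervalIntegrable (fun t : ℝ => √(1 - t ^ 2) ^ k * |t|) volume a b :=
    fun a b => by apply Continuous.intervalIntegrable; fun_prop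
  have hpos : ∫ t in (0 : ℝ)..1, √(1 - t ^ 2) ^ k * |t| = 1 / (k + 2) := by
    rw [← integral_sqrt_one_sub_sq_pow_mul_self k]
    refine integral_congr fun t ht => ?_
    rw [Set.uIcc_of_le zero_le_one] at ht
    simp only [abs_of_nonneg ht.1]
  have hneg : ∫ t in (-1 : ℝ)..0, √(1 - t ^ 2) ^ k * |t| = 1 / (k + 2) := by
    rw [← hpos, ← neg_zero, ← integral_comp_neg]
    simp only [neg_sq, abs_neg, neg_zero]
  rw [← integral_add_adjacent_intervals (hint _ 0) (hint 0 _), hneg, hpos]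
  ring

end OneDimensional

theorem setIntegral_prod_comp_fst {α β : Type*} [MeasurableSpace α] [MeasurableSpace β]
    {μ : Measure α} {ν : Measure β} [SFinite μ] [SFinite ν] {s : Set (α × β)}
    (hs : MeasurableSet s) {f : α → ℝ} (hf : IntegrableOn (fun p => f p.1) s (μ.prod ν)) :
    ∫ p in s, f p.1 ∂μ.prod ν = ∫ a, ν.real (Prod.mk a ⁻¹' s) * f a ∂μ := by
  rw [← integral_indicator hs, integral_prod _ (hf.integrable_indicator hs)]
  congr 1 with a
  rw [← smul_eq_mul, ← integral_indicator_const _ (measurable_prodMk_left hs)]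
  rfl

theorem le_of_closedBall_subset_closedBall {F : Type*} [NormedAddCommGroup F] [NormedSpace ℝ F]
    [Nontrivial F] {r s : ℝ} (hr : 0 ≤ r) (h : closedBall (0 : F) r ⊆ closedBall 0 s) :
    r ≤ s := by
  obtain ⟨y, hy⟩ := exists_norm_eq F hr
  simpa [hy] using h (mem_closedBall_zero_iff.2 hy.le)

theorem smul_closedBall_zero_of_nonneg {F : Type*} [NormedAddCommGroup F] [NormedSpace ℝ F]
    {c r : ℝ} (hc : 0 ≤ c) (hr : 0 ≤ r) : c • closedBall (0 : F) r = closedBall 0 (c * r) := by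
  rw [_root_.smul_closedBall _ _ hr, smul_zero, Real.norm_of_nonneg hc]

section InnerProductSpace

variable {E : Type*} [NormedAddCommGroup E] [InnerProductSpace ℝ E] [FiniteDimensional ℝ E]
  [MeasurableSpace E] [BorelSpace E]

theorem volume_real_closedBall_zero {r : ℝ} (hr : 0 ≤ r) :
    volume.real (closedBall (0 : E) r) = r ^ finrank ℝ E * unitBallVol (finrank ℝ E) := by
  rw [measureReal_def, Measure.addHaar_closedBall _ _ hr, ENNReal.toReal_mul,
    ENNReal.toReal_ofReal (by positivity), unitBallVol,
    ← (stdOrthonormalBasis ℝ E).repr.symm.measurePreserving.measure_preimage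
      measurableSet_ball.nullMeasurableSet]
  simp

theorem volume_real_sq_add_norm_sq_le_one {t : ℝ} (ht : t ^ 2 ≤ 1) :
    volume.real {y : E | t ^ 2 + ‖y‖ ^ 2 ≤ 1} =
      √(1 - t ^ 2) ^ finrank ℝ E * unitBallVol (finrank ℝ E) := by
  have : {y : E | t ^ 2 + ‖y‖ ^ 2 ≤ 1} = closedBall 0 √(1 - t ^ 2) := by
    ext y
    rw [mem_closedBall_zero_iff, Real.le_sqrt (norm_nonneg _) (by linarith)]
    simp only [Set.mem_ofPred_eq]
    constructor <;> intro h <;> linarith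
  rw [this, volume_real_closedBall_zero (Real.sqrt_nonneg _)]

theorem volume_real_sq_add_norm_sq_le_one_of_one_lt {t : ℝ} (ht : 1 < t ^ 2) :
    volume.real {y : E | t ^ 2 + ‖y‖ ^ 2 ≤ 1} = 0 := by
  have : {y : E | t ^ 2 + ‖y‖ ^ 2 ≤ 1} = ∅ :=
    Set.eq_empty_of_forall_notMem fun y (hy : t ^ 2 + ‖y‖ ^ 2 ≤ 1) => by nlinarith [sq_nonneg ‖y‖]
  rw [this, measureReal_empty]

/-- `x ↦ (⟪v, x⟫, component of x orthogonal to v)`. -/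
noncomputable def spanUnitDecomposition (v : E) (hv : ‖v‖ = 1) : E ≃ᵐ ℝ × (ℝ ∙ v)ᗮ :=
  ((ℝ ∙ v).orthogonalDecomposition.trans
    (LinearIsometryEquiv.withLpProdCongr 2 (LinearIsometryEquiv.toSpanUnitSingleton v hv).symm
      (LinearIsometryEquiv.refl ℝ _))).toMeasurableEquiv.trans
    (MeasurableEquiv.toLp 2 _).symm

theorem measurePreserving_spanUnitDecomposition (v : E) (hv : ‖v‖ = 1) :
    MeasurePreserving (spanUnitDecomposition v hv) :=
  (WithLp.volume_preserving_symm_measurableEquiv_toLp_prod ℝ _).comp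
    (LinearIsometryEquiv.measurePreserving _)

theorem spanUnitDecomposition_fst (v : E) (hv : ‖v‖ = 1) (x : E) :
    (spanUnitDecomposition v hv x).1 = ⟪v, x⟫_ℝ := by
  change (LinearIsometryEquiv.toSpanUnitSingleton v hv).symm
    ((ℝ ∙ v).orthogonalProjectionOnto x) = _
  rw [LinearIsometryEquiv.symm_apply_eq, LinearIsometryEquiv.toSpanUnitSingleton_apply]
  ext
  simp [Submodule.starProjection_unit_singleton ℝ hv]

theorem norm_sq_eq_spanUnitDecomposition (v : E) (hv : ‖v‖ = 1) (x : E) :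
    ‖x‖ ^ 2 = (spanUnitDecomposition v hv x).1 ^ 2 + ‖(spanUnitDecomposition v hv x).2‖ ^ 2 := by
  have h := WithLp.prod_norm_sq_eq_of_L2 (((ℝ ∙ v).orthogonalDecomposition.trans
    (LinearIsometryEquiv.withLpProdCongr 2 (LinearIsometryEquiv.toSpanUnitSingleton v hv).symm
      (LinearIsometryEquiv.refl ℝ _))) x)
  rw [LinearIsometryEquiv.norm_map, Real.norm_eq_abs, sq_abs] at h
  exact h

theorem preimage_spanUnitDecomposition (v : E) (hv : ‖v‖ = 1) :
    spanUnitDecomposition v hv ⁻¹' {p | p.1 ^ 2 + ‖p.2‖ ^ 2 ≤ 1} = closedBall 0 1 := by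
  ext x
  rw [mem_closedBall_zero_iff, ← sq_le_one_iff₀ (norm_nonneg x),
    norm_sq_eq_spanUnitDecomposition v hv x]
  rfl

theorem integral_closedBall_comp_inner (v : E) (hv : ‖v‖ = 1) {f : ℝ → ℝ} (hf : Continuous f) :
    ∫ x in closedBall (0 : E) 1, f ⟪v, x⟫_ℝ =
      unitBallVol (finrank ℝ E - 1) *
        ∫ t in (-1 : ℝ)..1, √(1 - t ^ 2) ^ (finrank ℝ E - 1) * f t := by
  set T : Set (ℝ × (ℝ ∙ v)ᗮ) := {p | p.1 ^ 2 + ‖p.2‖ ^ 2 ≤ 1}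
  have he := measurePreserving_spanUnitDecomposition v hv
  have hemb := (spanUnitDecomposition v hv).measurableEmbedding
  have hint : IntegrableOn (fun p : ℝ × (ℝ ∙ v)ᗮ => f p.1) T := by
    rw [← he.integrableOn_comp_preimage hemb, preimage_spanUnitDecomposition]
    exact ContinuousOn.integrableOn_compact (isCompact_closedBall _ _)
      (by simp only [Function.comp_def, spanUnitDecomposition_fst]; fun_prop)
  have hrank : finrank ℝ (ℝ ∙ v)ᗮ = finrank ℝ E - 1 := by
    rw [← Submodule.finrank_add_finrank_orthogonal (ℝ ∙ v),
      finrank_span_singleton (norm_ne_zero_iff.1 (hv.trans_ne one_ne_zero))]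
    omega
  have htransfer := he.setIntegral_preimage_emb hemb (fun p => f p.1) T
  rw [preimage_spanUnitDecomposition] at htransfer
  simp only [spanUnitDecomposition_fst] at htransfer
  rw [htransfer, Measure.volume_eq_prod,
    setIntegral_prod_comp_fst (isClosed_le (by fun_prop) continuous_const).measurableSet hint,
    ← setIntegral_eq_integral_of_forall_compl_eq_zero (s := Set.Icc (-1) 1),
    integral_Icc_eq_integral_Ioc, ← intervalIntegral.integral_of_le (by norm_num),
    ← intervalIntegral.integral_const_mul]
  · refine intervalIntegral.integral_congr fun t ht => ?_
    rw [Set.uIcc_of_le (by norm_num)] at ht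
    simp only [Set.preimage_ofPred_eq]
    rw [volume_real_sq_add_norm_sq_le_one (by nlinarith [ht.1, ht.2]), hrank]
    ring
  · intro t ht
    have : 1 < t ^ 2 := by
      simp only [Set.mem_Icc, not_and_or, not_le] at ht
      rcases ht with h | h <;> nlinarith
    simp only [Set.preimage_ofPred_eq]
    rw [volume_real_sq_add_norm_sq_le_one_of_one_lt this, zero_mul]

theorem integral_closedBall_abs_inner_of_norm_eq_one (v : E) (hv : ‖v‖ = 1) :
    ∫ x in closedBall (0 : E) 1, |⟪v, x⟫_ℝ| =
      2 / (finrank ℝ E + 1) * unitBallVol (finrank ℝ E - 1) := by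
  have : Nontrivial E := ⟨v, 0, norm_ne_zero_iff.1 (hv.trans_ne one_ne_zero)⟩
  rw [integral_closedBall_comp_inner v hv continuous_abs, integral_sqrt_one_sub_sq_pow_mul_abs,
    Nat.cast_sub finrank_pos]
  ring_nf

theorem integral_closedBall_abs_inner (φ : E) {r : ℝ} (hr : 0 ≤ r) :
    ∫ x in closedBall (0 : E) r, |⟪φ, x⟫_ℝ| =
      r ^ (finrank ℝ E + 1) * ‖φ‖ * (2 / (finrank ℝ E + 1) * unitBallVol (finrank ℝ E - 1)) := by
  rcases hr.eq_or_lt with rfl | hr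
  · simp
  have hscale := Measure.setIntegral_comp_smul_of_pos volume (fun x : E => |⟪φ, x⟫_ℝ|)
    (closedBall 0 1) hr
  simp only [inner_smul_right, abs_mul, abs_of_pos hr, integral_const_mul,
    smul_unitClosedBall_of_nonneg hr.le, smul_eq_mul] at hscale
  rw [eq_inv_mul_iff_mul_eq₀ (by positivity)] at hscale
  rw [← hscale]
  rcases eq_or_ne φ 0 with rfl | hφ
  · simp
  have hφ' : ‖φ‖ ≠ 0 := norm_ne_zero_iff.2 hφ
  have hunit : ‖‖φ‖⁻¹ • φ‖ = 1 := by rw [norm_smul, norm_inv, norm_norm, inv_mul_cancel₀ hφ']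
  have hφ_eq : ∀ x, |⟪φ, x⟫_ℝ| = ‖φ‖ * |⟪‖φ‖⁻¹ • φ, x⟫_ℝ| := fun x => by
    rw [real_inner_smul_left, abs_mul, abs_inv, abs_norm, mul_inv_cancel_left₀ hφ']
  simp only [hφ_eq, ← mul_assoc, integral_const_mul,
    integral_closedBall_abs_inner_of_norm_eq_one _ hunit]
  ring

variable {K : Set E} {a b : ℝ}

theorem integrableOn_abs_inner_of_subset_closedBall (hKb : K ⊆ closedBall 0 b) (φ : E) :
    IntegrableOn (fun x => |⟪φ, x⟫_ℝ|) K :=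
  (ContinuousOn.integrableOn_compact (isCompact_closedBall 0 b) (by fun_prop)).mono_set hKb

theorem le_inv_volume_real_mul_integral_abs_inner (ha : 0 < a)
    (haK : closedBall 0 a ⊆ K) (hKb : K ⊆ closedBall 0 b) (φ : E) :
    a ^ (finrank ℝ E + 1) / b ^ finrank ℝ E / centroidConstantBall (finrank ℝ E) * ‖φ‖ ≤
      (volume.real K)⁻¹ * ∫ x in K, |⟪φ, x⟫_ℝ| := by
  have hb : 0 ≤ b := by simpa using hKb (haK (mem_closedBall_self ha.le))
  have hvol_pos : 0 < volume.real K := by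
    refine lt_of_lt_of_le ?_
      (measureReal_mono haK (measure_ne_top_of_subset hKb measure_closedBall_lt_top.ne))
    rw [volume_real_closedBall_zero ha.le]
    exact mul_pos (pow_pos ha _) (unitBallVol_pos _)
  have hvol_le : volume.real K ≤ b ^ finrank ℝ E * unitBallVol (finrank ℝ E) := by
    rw [← volume_real_closedBall_zero hb]
    exact measureReal_mono hKb measure_closedBall_lt_top.ne
  have hint : a ^ (finrank ℝ E + 1) * ‖φ‖ *
      (2 / (finrank ℝ E + 1) * unitBallVol (finrank ℝ E - 1)) ≤ ∫ x in K, |⟪φ, x⟫_ℝ| := by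
    rw [← integral_closedBall_abs_inner φ ha.le]
    exact setIntegral_mono_set (integrableOn_abs_inner_of_subset_closedBall hKb φ)
      (.of_forall fun x => abs_nonneg _) haK.eventuallyLE
  have hbd : 0 < b ^ finrank ℝ E :=
    pos_of_mul_pos_left (hvol_pos.trans_le hvol_le) (unitBallVol_pos _).le
  have := unitBallVol_pos (finrank ℝ E)
  have := unitBallVol_pos (finrank ℝ E - 1)
  calc a ^ (finrank ℝ E + 1) / b ^ finrank ℝ E / centroidConstantBall (finrank ℝ E) * ‖φ‖
      = (b ^ finrank ℝ E * unitBallVol (finrank ℝ E))⁻¹ * (a ^ (finrank ℝ E + 1) * ‖φ‖ *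
          (2 / (finrank ℝ E + 1) * unitBallVol (finrank ℝ E - 1))) := by
        rw [centroidConstantBall]; field_simp
    _ ≤ (volume.real K)⁻¹ * ∫ x in K, |⟪φ, x⟫_ℝ| := by gcongr

theorem inv_volume_real_mul_integral_abs_inner_le (ha : 0 < a)
    (haK : closedBall 0 a ⊆ K) (hKb : K ⊆ closedBall 0 b) (φ : E) :
    (volume.real K)⁻¹ * ∫ x in K, |⟪φ, x⟫_ℝ| ≤
      b ^ (finrank ℝ E + 1) / a ^ finrank ℝ E / centroidConstantBall (finrank ℝ E) * ‖φ‖ := by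
  have hb : 0 ≤ b := by simpa using hKb (haK (mem_closedBall_self ha.le))
  have hvol_ge : a ^ finrank ℝ E * unitBallVol (finrank ℝ E) ≤ volume.real K := by
    rw [← volume_real_closedBall_zero ha.le]
    exact measureReal_mono haK (measure_ne_top_of_subset hKb measure_closedBall_lt_top.ne)
  have hint : ∫ x in K, |⟪φ, x⟫_ℝ| ≤ b ^ (finrank ℝ E + 1) * ‖φ‖ *
      (2 / (finrank ℝ E + 1) * unitBallVol (finrank ℝ E - 1)) := by
    rw [← integral_closedBall_abs_inner φ hb]
    exact setIntegral_mono_set (integrableOn_abs_inner_of_subset_closedBall subset_rfl φ)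
      (.of_forall fun x => abs_nonneg _) hKb.eventuallyLE
  have := unitBallVol_pos (finrank ℝ E)
  have := unitBallVol_pos (finrank ℝ E - 1)
  calc (volume.real K)⁻¹ * ∫ x in K, |⟪φ, x⟫_ℝ|
      ≤ (a ^ finrank ℝ E * unitBallVol (finrank ℝ E))⁻¹ * (b ^ (finrank ℝ E + 1) * ‖φ‖ *
          (2 / (finrank ℝ E + 1) * unitBallVol (finrank ℝ E - 1))) := by gcongr
    _ = b ^ (finrank ℝ E + 1) / a ^ finrank ℝ E / centroidConstantBall (finrank ℝ E) * ‖φ‖ := by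
        rw [centroidConstantBall]; field_simp

end InnerProductSpace

section CentroidBody

variable {n : ℕ} {K : Set (EuclideanSpace ℝ (Fin n))} {r a b : ℝ}

theorem centroidBody_subset_closedBall_of_le (hr : 0 ≤ r)
    (h : ∀ φ, (volume.real K)⁻¹ * ∫ x in K, |⟪φ, x⟫_ℝ| ≤ r * ‖φ‖) :
    centroidBody n K ⊆ closedBall 0 r := by
  intro y hy
  rw [mem_closedBall_zero_iff]
  rcases (norm_nonneg y).eq_or_lt with hy0 | hy0
  · rwa [← hy0]
  have : ‖y‖ * ‖y‖ ≤ r * ‖y‖ := by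
    rw [← real_inner_self_eq_norm_mul_norm]
    exact (hy y).trans (h y)
  exact le_of_mul_le_mul_right this hy0

theorem closedBall_subset_centroidBody_of_le
    (h : ∀ φ, r * ‖φ‖ ≤ (volume.real K)⁻¹ * ∫ x in K, |⟪φ, x⟫_ℝ|) :
    closedBall 0 r ⊆ centroidBody n K := fun y hy φ =>
  calc ⟪y, φ⟫_ℝ ≤ ‖y‖ * ‖φ‖ := real_inner_le_norm y φ
    _ ≤ r * ‖φ‖ := by gcongr; exact mem_closedBall_zero_iff.1 hy
    _ ≤ _ := h φ

theorem centroidBody_subset_closedBall (ha : 0 < a) (haK : closedBall 0 a ⊆ K)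
    (hKb : K ⊆ closedBall 0 b) :
    centroidBody n K ⊆ closedBall 0 (b ^ (n + 1) / a ^ n / centroidConstantBall n) := by
  have hb : 0 ≤ b := by simpa using hKb (haK (mem_closedBall_self ha.le))
  have := centroidConstantBall_pos n
  refine centroidBody_subset_closedBall_of_le (by positivity) fun φ => ?_
  simpa using inv_volume_real_mul_integral_abs_inner_le ha haK hKb φ

theorem closedBall_subset_centroidBody (ha : 0 < a) (haK : closedBall 0 a ⊆ K)
    (hKb : K ⊆ closedBall 0 b) :
    closedBall 0 (a ^ (n + 1) / b ^ n / centroidConstantBall n) ⊆ centroidBody n K :=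
  closedBall_subset_centroidBody_of_le fun φ => by
    simpa using le_inv_volume_real_mul_integral_abs_inner ha haK hKb φ

variable [NeZero n] {c : ℝ}

theorem centroidConstantBall_div_le (ha : 0 < a) (haK : closedBall 0 a ⊆ K)
    (hKb : K ⊆ closedBall 0 b) (hc : 0 < c) (hfix : K = c • centroidBody n K) :
    centroidConstantBall n / c ≤ (b / a) ^ (n + 1) := by
  have hC := centroidConstantBall_pos n
  have hb : 0 ≤ b := by simpa using hKb (haK (mem_closedBall_self ha.le))
  have hR : 0 ≤ b ^ (n + 1) / a ^ n / centroidConstantBall n := by positivity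
  have h : a ≤ c * (b ^ (n + 1) / a ^ n / centroidConstantBall n) := by
    refine le_of_closedBall_subset_closedBall (F := EuclideanSpace ℝ (Fin n)) ha.le ?_
    calc closedBall 0 a ⊆ K := haK
      _ = c • centroidBody n K := hfix
      _ ⊆ c • closedBall 0 _ := Set.smul_set_mono (centroidBody_subset_closedBall ha haK hKb)
      _ = _ := smul_closedBall_zero_of_nonneg hc.le hR
  rw [div_le_iff₀ hc, div_pow, div_mul_eq_mul_div, le_div_iff₀ (by positivity)]
  calc centroidConstantBall n * a ^ (n + 1) = centroidConstantBall n * a ^ n * a := by ring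
    _ ≤ centroidConstantBall n * a ^ n * (c * (b ^ (n + 1) / a ^ n / centroidConstantBall n)) := by
        gcongr
    _ = b ^ (n + 1) * c := by field_simp

theorem pow_le_centroidConstantBall_div (ha : 0 < a) (haK : closedBall 0 a ⊆ K)
    (hKb : K ⊆ closedBall 0 b) (hc : 0 < c) (hfix : K = c • centroidBody n K) :
    (a / b) ^ (n + 1) ≤ centroidConstantBall n / c := by
  have hC := centroidConstantBall_pos n
  have hb : 0 < b := ha.trans_le <|
    le_of_closedBall_subset_closedBall (F := EuclideanSpace ℝ (Fin n)) ha.le (haK.trans hKb)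
  have hr : 0 ≤ a ^ (n + 1) / b ^ n / centroidConstantBall n := by positivity
  have h : c * (a ^ (n + 1) / b ^ n / centroidConstantBall n) ≤ b := by
    refine le_of_closedBall_subset_closedBall (F := EuclideanSpace ℝ (Fin n)) (by positivity) ?_
    calc closedBall 0 (c * _) = c • closedBall 0 _ := (smul_closedBall_zero_of_nonneg hc.le hr).symm
      _ ⊆ c • centroidBody n K := Set.smul_set_mono (closedBall_subset_centroidBody ha haK hKb)
      _ = K := hfix.symm
      _ ⊆ closedBall 0 b := hKb
  rw [le_div_iff₀ hc, div_pow, div_mul_eq_mul_div, div_le_iff₀ (by positivity)]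
  calc a ^ (n + 1) * c = c * (a ^ (n + 1) / b ^ n / centroidConstantBall n) *
        (centroidConstantBall n * b ^ n) := by field_simp
    _ ≤ b * (centroidConstantBall n * b ^ n) := by gcongr
    _ = centroidConstantBall n * b ^ (n + 1) := by ring

end CentroidBody

theorem centroid_constant_stability_general (n : ℕ) (hn : 3 ≤ n) (ε : ℝ) (hε0 : 0 < ε) (hε : ε < 1 / 2)
    (K : Set (EuclideanSpace ℝ (Fin n)))
    (hK1 : (1 - ε) • Metric.closedBall (0 : EuclideanSpace ℝ (Fin n)) 1 ⊆ K)
    (hK2 : K ⊆ (1 + ε) • Metric.closedBall (0 : EuclideanSpace ℝ (Fin n)) 1)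
    (CK : ℝ) (hCK : 0 < CK) (hfix : K = CK • centroidBody n K) :
    ((1 - ε) / (1 + ε)) ^ (n + 1) ≤
        (((n : ℝ) + 1) * unitBallVol n / (2 * unitBallVol (n - 1))) / CK ∧
      (((n : ℝ) + 1) * unitBallVol n / (2 * unitBallVol (n - 1))) / CK ≤
        ((1 + ε) / (1 - ε)) ^ (n + 1) := by
  have : NeZero n := ⟨by omega⟩
  have hε1 : 0 < 1 - ε := by linarith
  rw [smul_unitClosedBall_of_nonneg hε1.le] at hK1
  rw [smul_unitClosedBall_of_nonneg (by linarith)] at hK2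
  exact ⟨pow_le_centroidConstantBall_div hε1 hK1 hK2 hCK hfix,
    centroidConstantBall_div_le hε1 hK1 hK2 hCK hfix⟩

/-- if ε ∈ (0,1/2) and the convex body K satisfies (1−ε)B ⊆ K ⊆ (1+ε)B and
K = C_K·ΓK with C_K > 0, then ((1−ε)/(1+ε))^{n+1} ≤ C_B/C_K ≤ ((1+ε)/(1−ε))^{n+1},
where C_B = (n+1)κ_n/(2κ_{n−1}). -/
theorem centroid_constant_stability (n : ℕ) (hn : 3 ≤ n) (ε : ℝ) (hε0 : 0 < ε) (hε : ε < 1 / 2)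
    (K : Set (EuclideanSpace ℝ (Fin n))) (hKconv : Convex ℝ K) (hKcomp : IsCompact K)
    (h0K : (0 : EuclideanSpace ℝ (Fin n)) ∈ interior K)
    (hK1 : (1 - ε) • Metric.closedBall (0 : EuclideanSpace ℝ (Fin n)) 1 ⊆ K)
    (hK2 : K ⊆ (1 + ε) • Metric.closedBall (0 : EuclideanSpace ℝ (Fin n)) 1)
    (CK : ℝ) (hCK : 0 < CK) (hfix : K = CK • centroidBody n K) :
    ((1 - ε) / (1 + ε)) ^ (n + 1) ≤
        (((n : ℝ) + 1) * unitBallVol n / (2 * unitBallVol (n - 1))) / CK ∧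
      (((n : ℝ) + 1) * unitBallVol n / (2 * unitBallVol (n - 1))) / CK ≤
        ((1 + ε) / (1 - ε)) ^ (n + 1) :=
  centroid_constant_stability_general n hn ε hε0 hε K hK1 hK2 CK hCK hfix
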